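/- Let I ⊆ ℂ[X] = ℂ[x₁,…,x_n] be an ideal, F ∈ ℂ[T] squarefree, and r = x_n + Σ_{i=1}^{n-1} aᵢxᵢ with a₁,…,a_{n-1} ∈ ℂ, such that deg(F) = dim_ℂ(ℂ[X]/I) = d (finite), F(r) ∈ I, and no proper factor of F(r) is in I. Let λ : ℂ[X]/I → ℂ[X]/I be multiplication by r. Then the zeros of F are exactly the eigenvalues of λ; if λ₁,…,λ_d are the (pairwise distinct) eigenvalues of λ, then I = ⋂_{i=1}^{d} ⟨I, r − λᵢ⟩, and ⟨I, r − λᵢ⟩ is a maximal ideal of ℂ[X] for each i = 1,…,d. -/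

import Mathlib

/-!
Work in `A = ℂ[X]/I` with `x` the class of `r`. The minimal polynomial of `x` divides `F`, and
the hypothesis on proper factors forces it to have the degree of `F`; so the roots of `F` are
those of `minpoly x`, which are the eigenvalues of multiplication by `x`. As `deg (minpoly x) ≤ d`,
the `d` distinct eigenvalues `μᵢ` are all of its roots, whence `∏ (x - μᵢ) = 0`. The ideals
`(x - μᵢ)` of `A` are proper and pairwise coprime, so their intersection is `(∏ (x - μᵢ)) = 0`,
and by the Chinese remainder theorem `A` surjects onto `∏ A/(x - μᵢ)`: these `d` nonzero
quotients have total dimension at most `d`, so each is one-dimensional, i.e. a field. Pulling back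
along `ℂ[X] → A` gives the statement.
-/

open MvPolynomial

open scoped Polynomial Function

section FiniteDimensionalAlgebra

variable {K A : Type*} [Field K] [CommRing A] [Algebra K A]

lemma minpoly_mulLeft (x : A) : minpoly K (LinearMap.mulLeft K x) = minpoly K x :=
  minpoly.algHom_eq (Algebra.lmul K A) Algebra.lmul_injective x

lemma hasEigenvalue_mulLeft_iff [FiniteDimensional K A] {x : A} {z : K} :
    Module.End.HasEigenvalue (LinearMap.mulLeft K x) z ↔ (minpoly K x).IsRoot z := by
  rw [Module.End.hasEigenvalue_iff_isRoot, minpoly_mulLeft]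

lemma not_isUnit_sub_algebraMap_of_hasEigenvalue [FiniteDimensional K A] {x : A} {z : K}
    (h : Module.End.HasEigenvalue (LinearMap.mulLeft K x) z) : ¬IsUnit (x - algebraMap K A z) := by
  have hz : z ∈ spectrum K x :=
    AlgHom.spectrum_apply_subset (Algebra.lmul K A) x
      (Module.End.hasEigenvalue_iff_mem_spectrum.mp h)
  rwa [spectrum.mem_iff, ← neg_sub, IsUnit.neg_iff] at hz

lemma isRoot_iff_isRoot_minpoly [FiniteDimensional K A] [Nontrivial A] {x : A} {F : K[X]}
    (hF : F ≠ 0) (hFx : Polynomial.aeval x F = 0)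
    (hproper : ∀ H : K[X], H ∣ F → 0 < H.natDegree → H.natDegree < F.natDegree →
      Polynomial.aeval x H ≠ 0) (z : K) :
    F.IsRoot z ↔ (minpoly K x).IsRoot z := by
  have hint : IsIntegral K x := .of_finite K x
  have hdvd : minpoly K x ∣ F := minpoly.dvd K x hFx
  have hdeg : F.natDegree ≤ (minpoly K x).natDegree := by
    by_contra! hlt
    exact hproper _ hdvd (minpoly.natDegree_pos hint) hlt (minpoly.aeval K x)
  rw [Polynomial.eq_mul_leadingCoeff_of_monic_of_dvd_of_natDegree_le (minpoly.monic hint) hdvd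
    hdeg]
  simp [Polynomial.IsRoot, hF]

lemma isRoot_iff_hasEigenvalue_mulLeft [FiniteDimensional K A] {x : A} {F : K[X]}
    (hF : F ≠ 0) (hdeg : F.natDegree = Module.finrank K A) (hFx : Polynomial.aeval x F = 0)
    (hproper : ∀ H : K[X], H ∣ F → 0 < H.natDegree → H.natDegree < F.natDegree →
      Polynomial.aeval x H ≠ 0) (z : K) :
    F.IsRoot z ↔ Module.End.HasEigenvalue (LinearMap.mulLeft K x) z := by
  rcases subsingleton_or_nontrivial A with hA | hA
  · refine iff_of_false (fun hz => ?_) fun h => ?_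
    · have := Polynomial.degree_pos_of_root hF hz
      rw [Polynomial.degree_eq_natDegree hF, hdeg, Module.finrank_zero_of_subsingleton] at this
      exact lt_irrefl _ this
    · obtain ⟨v, hv⟩ := h.exists_hasEigenvector
      exact hv.2 (Subsingleton.elim v 0)
  · rw [hasEigenvalue_mulLeft_iff]
    exact isRoot_iff_isRoot_minpoly hF hFx hproper z

lemma isCoprime_sub_algebraMap (x : A) {a b : K} (hab : a ≠ b) :
    IsCoprime (x - algebraMap K A a) (x - algebraMap K A b) := by
  simpa using (Polynomial.isCoprime_X_sub_C_of_isUnit_sub (sub_ne_zero_of_ne hab).isUnit).map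
    (Polynomial.aeval (R := K) x).toRingHom

lemma prod_sub_algebraMap_eq_zero [FiniteDimensional K A] {ι : Type*} [Fintype ι] {x : A}
    {μ : ι → K} (hμ : Function.Injective μ) (hroot : ∀ i, (minpoly K x).IsRoot (μ i))
    (hcard : Module.finrank K A ≤ Fintype.card ι) :
    ∏ i, (x - algebraMap K A (μ i)) = 0 := by
  have hint : IsIntegral K x := .of_finite K x
  have hmonic : (∏ i, (Polynomial.X - Polynomial.C (μ i))).Monic :=
    Polynomial.monic_prod_of_monic _ _ fun i _ => Polynomial.monic_X_sub_C (μ i)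
  have hdvd : ∏ i, (Polynomial.X - Polynomial.C (μ i)) ∣ minpoly K x :=
    Finset.prod_dvd_of_coprime ((Polynomial.pairwise_coprime_X_sub_C hμ).set_pairwise _)
      fun i _ => Polynomial.dvd_iff_isRoot.mpr (hroot i)
  have hdeg : (minpoly K x).natDegree ≤ (∏ i, (Polynomial.X - Polynomial.C (μ i))).natDegree := by
    rw [Polynomial.natDegree_finsetProd_X_sub_C_eq_card, Finset.card_univ]
    exact (minpoly.natDegree_le x).trans hcard
  have := minpoly.aeval K x
  rw [Polynomial.eq_of_monic_of_dvd_of_natDegree_le hmonic (minpoly.monic hint) hdvd hdeg,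
    map_prod] at this
  simpa [Polynomial.algebraMap_apply] using this

lemma Ideal.isMaximal_of_finrank_quotient_eq_one {J : Ideal A}
    (h : Module.finrank K (A ⧸ J) = 1) : J.IsMaximal := by
  have : Nontrivial (A ⧸ J) := Module.nontrivial_of_finrank_eq_succ h
  have hsurj : Function.Surjective (algebraMap K (A ⧸ J)) := fun q =>
    Algebra.mem_bot.mp (Subalgebra.bot_eq_top_iff_finrank_eq_one.mpr h ▸ Algebra.mem_top)
  exact Ideal.Quotient.maximal_of_isField _
    ((RingEquiv.ofBijective _ ⟨(algebraMap K _).injective, hsurj⟩).toMulEquiv.symm.isField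
      (Field.toIsField K))

lemma Ideal.sum_finrank_quotient_le_of_pairwise_isCoprime [FiniteDimensional K A] {ι : Type*}
    [Fintype ι] {J : ι → Ideal A} (hJ : Pairwise (IsCoprime on J)) :
    ∑ i, Module.finrank K (A ⧸ J i) ≤ Module.finrank K A := by
  rw [← Module.finrank_pi_fintype]
  exact LinearMap.finrank_le_finrank_of_surjective
    (f := (LinearMap.pi fun i => (J i).mkQ).restrictScalars K) (Ideal.pi_mkQ_surjective hJ)

lemma Ideal.isMaximal_of_pairwise_isCoprime_of_finrank_le [FiniteDimensional K A] {ι : Type*}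
    [Fintype ι] {J : ι → Ideal A} (hJ : Pairwise (IsCoprime on J)) (hne : ∀ i, J i ≠ ⊤)
    (hcard : Module.finrank K A ≤ Fintype.card ι) (i : ι) : (J i).IsMaximal := by
  have hpos : ∀ j, 1 ≤ Module.finrank K (A ⧸ J j) := fun j =>
    have : Nontrivial (A ⧸ J j) := Ideal.Quotient.nontrivial_iff.mpr (hne j)
    Module.finrank_pos
  refine Ideal.isMaximal_of_finrank_quotient_eq_one (K := K) (le_antisymm ?_ (hpos i))
  by_contra! hi
  have := calc Fintype.card ι = ∑ _j : ι, 1 := by simp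
    _ < ∑ j, Module.finrank K (A ⧸ J j) :=
      Finset.sum_lt_sum (fun j _ => hpos j) ⟨i, Finset.mem_univ i, hi⟩
    _ ≤ Module.finrank K A := Ideal.sum_finrank_quotient_le_of_pairwise_isCoprime hJ
  omega

end FiniteDimensionalAlgebra

lemma Ideal.sup_span_singleton_eq_comap_mk {R : Type*} [CommRing R] (I : Ideal R) (y : R) :
    I ⊔ Ideal.span {y} = (Ideal.span {Ideal.Quotient.mk I y}).comap (Ideal.Quotient.mk I) := by
  rw [← Set.image_singleton, ← Ideal.map_span,
    Ideal.comap_map_of_surjective _ Ideal.Quotient.mk_surjective, ← RingHom.ker_eq_comap_bot,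
    Ideal.mk_ker, sup_comm]

lemma Ideal.Quotient.aeval_mk_eq_zero_iff {K R : Type*} [CommRing K] [CommRing R] [Algebra K R]
    (I : Ideal R) (r : R) (H : K[X]) :
    Polynomial.aeval (Ideal.Quotient.mk I r) H = 0 ↔ Polynomial.aeval r H ∈ I := by
  rw [← Ideal.Quotient.mkₐ_eq_mk K, Polynomial.aeval_algHom_apply, Ideal.Quotient.mkₐ_eq_mk,
    Ideal.Quotient.eq_zero_iff_mem]

theorem statement16_general (n d : ℕ) (I : Ideal (MvPolynomial (Fin (n + 1)) ℂ))
    (F : Polynomial ℂ) (hsf : Squarefree F)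
    (r : MvPolynomial (Fin (n + 1)) ℂ)
    [hfin : Module.Finite ℂ (MvPolynomial (Fin (n + 1)) ℂ ⧸ I)]
    (hd : F.natDegree = d)
    (hdeg : d = Module.finrank ℂ (MvPolynomial (Fin (n + 1)) ℂ ⧸ I))
    (hFr : Polynomial.aeval r F ∈ I)
    (hproper : ∀ H : Polynomial ℂ, H ∣ F → 0 < H.natDegree → H.natDegree < F.natDegree →
      Polynomial.aeval r H ∉ I)
    (μ : Fin d → ℂ) (hμinj : Function.Injective μ)
    (hμeig : ∀ i, Module.End.HasEigenvalue
      (LinearMap.mulLeft ℂ (Ideal.Quotient.mk I r)) (μ i)) :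
    (∀ z : ℂ, F.IsRoot z ↔ Module.End.HasEigenvalue
      (LinearMap.mulLeft ℂ (Ideal.Quotient.mk I r)) z) ∧
    I = (⨅ i : Fin d, (I ⊔ Ideal.span {r - C (μ i)})) ∧
    ∀ i : Fin d, (I ⊔ Ideal.span {r - C (μ i)}).IsMaximal := by
  set x := Ideal.Quotient.mk I r
  set J : Fin d → Ideal (MvPolynomial (Fin (n + 1)) ℂ ⧸ I) :=
    fun i => Ideal.span {x - algebraMap ℂ _ (μ i)}
  have hJ : ∀ i, I ⊔ Ideal.span {r - C (μ i)} = (J i).comap (Ideal.Quotient.mk I) := fun i => by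
    rw [Ideal.sup_span_singleton_eq_comap_mk, map_sub, ← MvPolynomial.algebraMap_eq,
      Ideal.Quotient.mk_algebraMap]
  have hcop : Pairwise (IsCoprime on J) := fun i j hij =>
    (Ideal.isCoprime_span_singleton_iff _ _).mpr (isCoprime_sub_algebraMap x (hμinj.ne hij))
  have hcard : Module.finrank ℂ (MvPolynomial (Fin (n + 1)) ℂ ⧸ I) ≤ Fintype.card (Fin d) := by
    rw [Fintype.card_fin, hdeg]
  refine ⟨fun z => ?_, ?_, fun i => ?_⟩
  · refine isRoot_iff_hasEigenvalue_mulLeft hsf.ne_zero (hd.trans hdeg)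
      ((Ideal.Quotient.aeval_mk_eq_zero_iff I r F).mpr hFr) (fun H hdvd hpos hlt hH => ?_) z
    exact hproper H hdvd hpos hlt ((Ideal.Quotient.aeval_mk_eq_zero_iff I r H).mp hH)
  · have hbot : ⨅ i, J i = ⊥ := by
      rw [Ideal.iInf_span_singleton fun i j hij => isCoprime_sub_algebraMap x (hμinj.ne hij),
        prod_sub_algebraMap_eq_zero hμinj (fun i => hasEigenvalue_mulLeft_iff.mp (hμeig i)) hcard,
        Ideal.span_singleton_eq_bot]
    simp_rw [hJ, ← Ideal.comap_iInf, hbot, ← RingHom.ker_eq_comap_bot, Ideal.mk_ker]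
  · have hmax := Ideal.isMaximal_of_pairwise_isCoprime_of_finrank_le hcop
      (fun j => Ideal.span_singleton_ne_top (not_isUnit_sub_algebraMap_of_hasEigenvalue (hμeig j)))
      hcard i
    rw [hJ]
    exact Ideal.comap_isMaximal_of_surjective _ Ideal.Quotient.mk_surjective

/-- **Remark.** Let `I ⊆ ℂ[x₁,…,xₙ]` be an ideal, `F ∈ ℂ[T]` squarefree, `r = xₙ + Σ aᵢxᵢ`
with `aᵢ ∈ ℂ`, `deg F = dim_ℂ ℂ[X]/I = d` (finite), `F(r) ∈ I` and no proper factor of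
`F(r)` in `I`. Let `λ` be multiplication by `r` on `ℂ[X]/I`. Then the zeros of `F` are
exactly the eigenvalues of `λ`, and if `λ₁,…,λ_d` are the pairwise distinct eigenvalues of
`λ`, then `I = ⋂ᵢ ⟨I, r - λᵢ⟩` and each `⟨I, r - λᵢ⟩` is a maximal ideal of `ℂ[X]`. -/
theorem statement16 (n d : ℕ) (I : Ideal (MvPolynomial (Fin (n + 1)) ℂ))
    (F : Polynomial ℂ) (hsf : Squarefree F)
    (a : Fin n → ℂ) (r : MvPolynomial (Fin (n + 1)) ℂ)
    (hr : r = X (Fin.last n) + ∑ i : Fin n, C (a i) * X i.castSucc)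
    [hfin : Module.Finite ℂ (MvPolynomial (Fin (n + 1)) ℂ ⧸ I)]
    (hd : F.natDegree = d)
    (hdeg : d = Module.finrank ℂ (MvPolynomial (Fin (n + 1)) ℂ ⧸ I))
    (hFr : Polynomial.aeval r F ∈ I)
    (hproper : ∀ H : Polynomial ℂ, H ∣ F → 0 < H.natDegree → H.natDegree < F.natDegree →
      Polynomial.aeval r H ∉ I)
    (μ : Fin d → ℂ) (hμinj : Function.Injective μ)
    (hμeig : ∀ i, Module.End.HasEigenvalue
      (LinearMap.mulLeft ℂ (Ideal.Quotient.mk I r)) (μ i))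
    (hμall : ∀ z : ℂ, Module.End.HasEigenvalue
      (LinearMap.mulLeft ℂ (Ideal.Quotient.mk I r)) z → ∃ i, μ i = z) :
    (∀ z : ℂ, F.IsRoot z ↔ Module.End.HasEigenvalue
      (LinearMap.mulLeft ℂ (Ideal.Quotient.mk I r)) z) ∧
    I = (⨅ i : Fin d, (I ⊔ Ideal.span {r - C (μ i)})) ∧
    ∀ i : Fin d, (I ⊔ Ideal.span {r - C (μ i)}).IsMaximal :=
  statement16_general n d I F hsf r (hfin := hfin) hd hdeg hFr hproper μ hμinj hμeig
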